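/- arXiv:1209.0078 — 2 statements merged into one kernel-verified Lean document; each statement's English description precedes it below -/
import Mathlib

section
/- Let t > 0 and define a_n = 1/((t)_n · n!) for n ≥ 0 (and a_n = 0 for n < 0). Then every 2×2 minor of the Toeplitz matrix (a_{j−i})_{i,j≥1} is nonnegative; that is, for all positive integers i₁ < i₂ and j₁ < j₂, a_{j₁−i₁}·a_{j₂−i₂} − a_{j₂−i₁}·a_{j₁−i₂} ≥ 0. -/
open scoped Nat

noncomputable def rf (t : ℝ) : ℕ → ℝ
  | 0 => 1
  | n + 1 => rf t n * (t + n)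

noncomputable def aZ (t : ℝ) (m : ℤ) : ℝ :=
  if 0 ≤ m then 1 / (rf t m.toNat * (m.toNat)!) else 0

noncomputable def fA (t : ℝ) (n : ℕ) : ℝ := 1 / (rf t n * n !)

lemma rf_pos {t : ℝ} (ht : 0 < t) (n : ℕ) : 0 < rf t n := by
  induction n with
  | zero => simp [rf]
  | succ n ih =>
    have : (0:ℝ) < t + n := by positivity
    simpa [rf] using mul_pos ih this

lemma fA_pos {t : ℝ} (ht : 0 < t) (n : ℕ) : 0 < fA t n := by
  have := rf_pos ht n
  have h2 : (0:ℝ) < (n ! : ℝ) := by exact_mod_cast n.factorial_pos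
  unfold fA
  positivity

lemma aZ_coe (t : ℝ) (n : ℕ) : aZ t (n : ℤ) = fA t n := by
  simp [aZ, fA]

lemma aZ_nonneg {t : ℝ} (ht : 0 < t) (m : ℤ) : 0 ≤ aZ t m := by
  unfold aZ
  split
  · next h =>
    have := (fA_pos ht m.toNat).le
    simpa [fA] using this
  · exact le_refl 0

lemma fA_succ (t : ℝ) (n : ℕ) : fA t (n + 1) = fA t n / ((t + n) * (n + 1)) := by
  simp only [fA, rf, Nat.factorial_succ]
  rw [div_div]
  congr 1
  push_cast
  ring

lemma step {t : ℝ} (ht : 0 < t) (a b : ℕ) (h : a ≤ b) :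
    fA t a * fA t (b + 1) ≤ fA t (a + 1) * fA t b := by
  rw [fA_succ, fA_succ, mul_div_assoc', div_mul_eq_mul_div]
  have hnum : 0 ≤ fA t a * fA t b := by
    have := fA_pos ht a; have := fA_pos ht b; positivity
  have hb : (a:ℝ) ≤ (b:ℝ) := by exact_mod_cast h
  gcongr
  all_goals first | positivity | nlinarith

lemma chain {t : ℝ} (ht : 0 < t) (k : ℕ) :
    ∀ a b : ℕ, a + k ≤ b → fA t a * fA t (b + k) ≤ fA t (a + k) * fA t b := by
  induction k with
  | zero => intro a b _; simp
  | succ k ih =>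
    intro a b h
    calc fA t a * fA t (b + (k + 1)) = fA t a * fA t ((b + k) + 1) := by
          rw [show b + (k+1) = (b+k)+1 by omega]
      _ ≤ fA t (a + 1) * fA t (b + k) := step ht a (b + k) (by omega)
      _ ≤ fA t ((a + 1) + k) * fA t b := ih (a + 1) b (by omega)
      _ = fA t (a + (k + 1)) * fA t b := by rw [show (a+1)+k = a+(k+1) by omega]

lemma key {t : ℝ} (ht : 0 < t) (p q r s : ℤ) (hs : 0 ≤ s) (hsp : s ≤ p)
    (hpq : p ≤ q) (hsum : p + q = r + s) :
    0 ≤ aZ t p * aZ t q - aZ t r * aZ t s := by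
  have hp : 0 ≤ p := le_trans hs hsp
  have hq : 0 ≤ q := le_trans hp hpq
  have hr : 0 ≤ r := by omega
  lift s to ℕ using hs with S
  lift p to ℕ using hp with P
  lift q to ℕ using hq with Q
  lift r to ℕ using hr with R
  have h1 : S ≤ P := by exact_mod_cast hsp
  have h2 : P ≤ Q := by exact_mod_cast hpq
  have h3 : P + Q = R + S := by exact_mod_cast hsum
  rw [aZ_coe, aZ_coe, aZ_coe, aZ_coe]
  have := chain ht (P - S) S (S + (P - S) + (Q - P)) (by omega)
  have e3 : S + (P - S) + (Q - P) + (P - S) = R := by omega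
  have e2 : S + (P - S) + (Q - P) = Q := by omega
  have e1 : S + (P - S) = P := by omega
  rw [e3, e2, e1] at this
  nlinarith [this]

theorem stmt_2 (t : ℝ) (ht : 0 < t) (i₁ i₂ j₁ j₂ : ℤ)
    (hi1 : 1 ≤ i₁) (hj1 : 1 ≤ j₁) (hi : i₁ < i₂) (hj : j₁ < j₂) :
    0 ≤ aZ t (j₁ - i₁) * aZ t (j₂ - i₂) - aZ t (j₂ - i₁) * aZ t (j₁ - i₂) := by
  set p := j₁ - i₁ with hpdef
  set q := j₂ - i₂ with hqdef
  set r := j₂ - i₁ with hrdef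
  set s := j₁ - i₂ with hsdef
  by_cases hs : 0 ≤ s
  · have hsp : s ≤ p := by omega
    have hsq : s ≤ q := by omega
    have hsum : p + q = r + s := by omega
    rcases le_total p q with hpq | hqp
    · exact key ht p q r s hs hsp hpq hsum
    · have := key ht q p r s hs hsq hqp (by omega)
      linarith [this, mul_comm (aZ t q) (aZ t p)]
  · have : aZ t s = 0 := by simp [aZ, hs]
    rw [this, mul_zero, sub_zero]
    exact mul_nonneg (aZ_nonneg ht p) (aZ_nonneg ht q)
end

section
/- If {γ_n}_{n≥0} is a sequence of nonnegative reals and {γ_n/n!}_{n≥0} is a totally positive sequence (all minors of the Toeplitz matrix (γ_{j-i}/(j-i)!) are nonnegative, with entries 0 for j < i), then for each n the polynomial Σ_{k=0}^n C(n,k) γ_k x^k has nonnegative 2×2 Toeplitz minors of its coefficient sequence; in particular the coefficient sequence C(n,k)γ_k is log-concave in k. -/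
open scoped Nat

noncomputable def toeplitzEntry (b : ℕ → ℝ) (m : ℤ) : ℝ :=
  if 0 ≤ m then b m.toNat else 0

/-!
The Toeplitz entry of `c` at `m` factors as `n! · β m · u (n - m)` with `β m = γ m / m!` and
`u m = 1 / m!` (all three vanishing at negative arguments). Nonnegativity of all `2 × 2` Toeplitz
minors of a function `f : ℤ → ℝ` is the inequality `f (a + d) f (a - e) ≤ f a f (a + d - e)` for
`d, e ≥ 0` (the `PF₂` property). It holds for `β` by total positivity (whose `1 × 1` minors also
give `β ≥ 0`), for `u` because `m!` is log-convex, and it survives the reflection `m ↦ n - m`,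
scaling, and pointwise products of nonnegative functions. Log-concavity of `c` is the minor with
`d = e = 1`.
-/

theorem Nat.factorial_add_mul_factorial_add_le (A D E : ℕ) :
    (A + E)! * (A + D)! ≤ (A + D + E)! * A ! := by
  rw [← Nat.factorial_mul_ascFactorial A E, ← Nat.factorial_mul_ascFactorial (A + D) E]
  calc A ! * (A + 1).ascFactorial E * (A + D)!
      ≤ A ! * (A + D + 1).ascFactorial E * (A + D)! :=
        Nat.mul_le_mul_right _ (Nat.mul_le_mul_left _ (Nat.ascFactorial_le E (by omega)))
    _ = (A + D)! * (A + D + 1).ascFactorial E * A ! := by ring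

@[simp]
lemma toeplitzEntry_natCast (b : ℕ → ℝ) (m : ℕ) : toeplitzEntry b m = b m := by
  simp [toeplitzEntry]

lemma toeplitzEntry_of_neg (b : ℕ → ℝ) {m : ℤ} (hm : m < 0) : toeplitzEntry b m = 0 := by
  simp [toeplitzEntry, not_le.mpr hm]

lemma toeplitzEntry_nonneg {b : ℕ → ℝ} (hb : ∀ m, 0 ≤ b m) (m : ℤ) :
    0 ≤ toeplitzEntry b m := by
  unfold toeplitzEntry; split_ifs <;> simp [hb]

/-- `f a * f (a + d - e) - f (a + d) * f (a - e)` is the general `2 × 2` minor of the Toeplitz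
matrix `(f (j - i))`, with rows `i, i + e` and columns `j, j + d`, where `a = j - i`. -/
def IsPF2 (f : ℤ → ℝ) : Prop :=
  ∀ a d e : ℤ, 0 ≤ d → 0 ≤ e → f (a + d) * f (a - e) ≤ f a * f (a + d - e)

namespace IsPF2

variable {f g : ℤ → ℝ}

lemma mul (hf : IsPF2 f) (hg : IsPF2 g) (hf₀ : ∀ m, 0 ≤ f m) (hg₀ : ∀ m, 0 ≤ g m) :
    IsPF2 fun m => f m * g m := by
  intro a d e hd he
  calc f (a + d) * g (a + d) * (f (a - e) * g (a - e))
      = f (a + d) * f (a - e) * (g (a + d) * g (a - e)) := by ring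
    _ ≤ f a * f (a + d - e) * (g a * g (a + d - e)) :=
        mul_le_mul (hf a d e hd he) (hg a d e hd he) (mul_nonneg (hg₀ _) (hg₀ _))
          (mul_nonneg (hf₀ _) (hf₀ _))
    _ = f a * g a * (f (a + d - e) * g (a + d - e)) := by ring

lemma const_mul (hf : IsPF2 f) (c : ℝ) : IsPF2 fun m => c * f m := by
  intro a d e hd he
  calc c * f (a + d) * (c * f (a - e)) = c ^ 2 * (f (a + d) * f (a - e)) := by ring
    _ ≤ c ^ 2 * (f a * f (a + d - e)) := mul_le_mul_of_nonneg_left (hf a d e hd he) (sq_nonneg c)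
    _ = c * f a * (c * f (a + d - e)) := by ring

lemma comp_sub (hf : IsPF2 f) (n : ℤ) : IsPF2 fun m => f (n - m) := by
  intro a d e hd he
  have h := hf (n - a) e d he hd
  rw [show n - a + e - d = n - (a + d - e) by ring, show n - a + e = n - (a - e) by ring,
    show n - a - d = n - (a + d) by ring] at h
  linarith

lemma minor_nonneg (hf : IsPF2 f) {i₁ i₂ j₁ j₂ : ℤ} (hi : i₁ < i₂) (hj : j₁ < j₂) :
    0 ≤ f (j₁ - i₁) * f (j₂ - i₂) - f (j₂ - i₁) * f (j₁ - i₂) := by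
  have h := hf (j₁ - i₁) (j₂ - j₁) (i₂ - i₁) (by omega) (by omega)
  rw [show j₁ - i₁ + (j₂ - j₁) - (i₂ - i₁) = j₂ - i₂ by ring,
    show j₁ - i₁ + (j₂ - j₁) = j₂ - i₁ by ring, show j₁ - i₁ - (i₂ - i₁) = j₁ - i₂ by ring] at h
  linarith

lemma mul_le_sq {b : ℕ → ℝ} (hb : IsPF2 (toeplitzEntry b)) {k : ℕ} (hk : 1 ≤ k) :
    b (k - 1) * b (k + 1) ≤ b k ^ 2 := by
  have h := hb k 1 1 zero_le_one zero_le_one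
  rw [add_sub_cancel_right, ← Nat.cast_pred hk, ← Nat.cast_succ, toeplitzEntry_natCast,
    toeplitzEntry_natCast, toeplitzEntry_natCast] at h
  linarith

end IsPF2

lemma isPF2_toeplitzEntry_inv_factorial : IsPF2 (toeplitzEntry fun m => (m ! : ℝ)⁻¹) := by
  intro a d e hd he
  have hnonneg := toeplitzEntry_nonneg (b := fun m => (m ! : ℝ)⁻¹) (fun m => by positivity)
  rcases lt_or_ge (a - e) 0 with h | h
  · rw [toeplitzEntry_of_neg _ h, mul_zero]
    exact mul_nonneg (hnonneg _) (hnonneg _)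
  lift d to ℕ using hd
  lift e to ℕ using he
  obtain ⟨A, hA⟩ := Int.eq_ofNat_of_zero_le h
  obtain rfl : a = ((A + e : ℕ) : ℤ) := by push_cast; omega
  rw [show ((A + e : ℕ) : ℤ) + d - e = ((A + d : ℕ) : ℤ) by push_cast; ring,
    show ((A + e : ℕ) : ℤ) + d = ((A + d + e : ℕ) : ℤ) by push_cast; ring,
    show ((A + e : ℕ) : ℤ) - e = (A : ℤ) by push_cast; ring]
  simp only [toeplitzEntry_natCast, ← mul_inv]
  apply inv_anti₀ (by positivity)
  exact_mod_cast Nat.factorial_add_mul_factorial_add_le A d e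

def IsTotallyPositive (b : ℕ → ℝ) : Prop :=
  ∀ (r : ℕ) (i j : Fin r → ℤ), StrictMono i → StrictMono j →
    (∀ k, 1 ≤ i k) → (∀ k, 1 ≤ j k) →
    0 ≤ Matrix.det (fun k l : Fin r => toeplitzEntry b (j l - i k))

namespace IsTotallyPositive

variable {b : ℕ → ℝ}

lemma nonneg (hb : IsTotallyPositive b) (m : ℕ) : 0 ≤ b m := by
  have h := hb 1 ![1] ![1 + m] (Subsingleton.strictMono _) (Subsingleton.strictMono _)
    (fun _ => by simp) (fun _ => by simp)
  rw [Matrix.det_fin_one (A := fun k l => _)] at h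
  simpa using h

lemma isPF2 (hb : IsTotallyPositive b) : IsPF2 (toeplitzEntry b) := by
  intro a d e hd he
  rcases hd.eq_or_lt with rfl | hd
  · simp
  rcases he.eq_or_lt with rfl | he
  · simp [mul_comm]
  rcases lt_or_ge a 0 with ha | ha
  · rw [toeplitzEntry_of_neg b ha, toeplitzEntry_of_neg b (by omega : a - e < 0)]
    simp
  have h := hb 2 ![1, 1 + e] ![1 + a, 1 + a + d]
    (by simp [Fin.strictMono_iff_lt_succ]; omega) (by simp [Fin.strictMono_iff_lt_succ]; omega)
    (Fin.forall_fin_two.mpr ⟨le_rfl, by simp; omega⟩)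
    (Fin.forall_fin_two.mpr ⟨by simp; omega, by simp; omega⟩)
  rw [Matrix.det_fin_two (A := fun k l => _)] at h
  simp only [Matrix.cons_val_zero, Matrix.cons_val_one] at h
  rw [show 1 + a - 1 = a by ring, show 1 + a + d - (1 + e) = a + d - e by ring,
    show 1 + a + d - 1 = a + d by ring, show 1 + a - (1 + e) = a - e by ring] at h
  linarith

end IsTotallyPositive

lemma toeplitzEntry_choose_mul (γ : ℕ → ℝ) (n : ℕ) :
    toeplitzEntry (fun k => if k ≤ n then (n.choose k : ℝ) * γ k else 0) =
      fun m => (n ! : ℝ) * (toeplitzEntry (fun k => γ k / k !) m *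
        toeplitzEntry (fun k => (k ! : ℝ)⁻¹) (n - m)) := by
  funext m
  rcases lt_or_ge m 0 with hm | hm
  · simp [toeplitzEntry_of_neg _ hm]
  lift m to ℕ using hm
  rcases le_or_gt m n with hmn | hmn
  · rw [← Nat.cast_sub hmn]
    simp only [toeplitzEntry_natCast, if_pos hmn, Nat.cast_choose ℝ hmn]
    field_simp
  · rw [toeplitzEntry_of_neg _ (by omega : (n : ℤ) - m < 0)]
    simp [hmn.not_ge]

theorem stmt_15_general (γ : ℕ → ℝ)
    (htp : ∀ (r : ℕ) (i j : Fin r → ℤ), StrictMono i → StrictMono j →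
      (∀ k, 1 ≤ i k) → (∀ k, 1 ≤ j k) →
      0 ≤ Matrix.det (fun k l : Fin r => toeplitzEntry (fun m => γ m / m !) (j l - i k)))
    (n : ℕ) (c : ℕ → ℝ) (hc : ∀ k, c k = if k ≤ n then (n.choose k : ℝ) * γ k else 0) :
    (∀ i₁ i₂ j₁ j₂ : ℤ, 1 ≤ i₁ → 1 ≤ j₁ → i₁ < i₂ → j₁ < j₂ →
      0 ≤ toeplitzEntry c (j₁ - i₁) * toeplitzEntry c (j₂ - i₂)
            - toeplitzEntry c (j₂ - i₁) * toeplitzEntry c (j₁ - i₂)) ∧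
    (∀ k : ℕ, 1 ≤ k → c (k - 1) * c (k + 1) ≤ c k ^ 2) := by
  have hB : IsTotallyPositive fun m => γ m / m ! := htp
  have hU : ∀ m, 0 ≤ toeplitzEntry (fun k => (k ! : ℝ)⁻¹) m :=
    toeplitzEntry_nonneg fun k => by positivity
  have hPF2 : IsPF2 (toeplitzEntry c) := by
    rw [funext hc, toeplitzEntry_choose_mul]
    exact (hB.isPF2.mul (isPF2_toeplitzEntry_inv_factorial.comp_sub n)
      (toeplitzEntry_nonneg hB.nonneg) fun m => hU _).const_mul _
  exact ⟨fun _ _ _ _ _ _ hi hj => hPF2.minor_nonneg hi hj, fun _ hk => hPF2.mul_le_sq hk⟩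

theorem stmt_15 (γ : ℕ → ℝ) (hnn : ∀ n, 0 ≤ γ n)
    (htp : ∀ (r : ℕ) (i j : Fin r → ℤ), StrictMono i → StrictMono j →
      (∀ k, 1 ≤ i k) → (∀ k, 1 ≤ j k) →
      0 ≤ Matrix.det (fun k l : Fin r => toeplitzEntry (fun m => γ m / m !) (j l - i k)))
    (n : ℕ) (c : ℕ → ℝ) (hc : ∀ k, c k = if k ≤ n then (n.choose k : ℝ) * γ k else 0) :
    (∀ i₁ i₂ j₁ j₂ : ℤ, 1 ≤ i₁ → 1 ≤ j₁ → i₁ < i₂ → j₁ < j₂ →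
      0 ≤ toeplitzEntry c (j₁ - i₁) * toeplitzEntry c (j₂ - i₂)
            - toeplitzEntry c (j₂ - i₁) * toeplitzEntry c (j₁ - i₂)) ∧
    (∀ k : ℕ, 1 ≤ k → c (k - 1) * c (k + 1) ≤ c k ^ 2) :=
  stmt_15_general γ htp n c hc
end
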